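/- Let $\hat\alpha > 0$ and $n \ge 2$. For the homogeneous complete-graph harmonic process with $c_{xy} \equiv 1/n$ and $\alpha_x \equiv \hat\alpha$, the function $f_a(\eta) = \sum_{x} \eta_x^2 - a$ with $a = \frac{1}{n}\frac{\hat\alpha+1}{\hat\alpha + 1/n}$ satisfies, on the simplex $\{\eta : \eta_x \ge 0, \sum_x \eta_x = 1\}$, the eigenvalue equation $\mathcal{L} f_a = -\lambda_2 f_a$ with $\lambda_2 = \frac{2}{\hat\alpha}\frac{\hat\alpha + 1/n}{\hat\alpha+1}$; moreover $\lambda_2 < 1/\hat\alpha$ if and only if $\hat\alpha < 1 - 2/n$. -/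
import Mathlib


open MeasureTheory

/-- Harmonic-process update: `(η_x, η_y) ↦ (u η_x, (1-u) η_x + η_y)`. -/
noncomputable def hpUpdate {n : ℕ} (η : Fin n → ℝ) (x y : Fin n) (u : ℝ) : Fin n → ℝ :=
  Function.update (Function.update η x (u * η x)) y ((1 - u) * η x + η y)

/-- Generator of the homogeneous harmonic process on the complete graph with
rates `c_{xy} ≡ 1/n` and weights `α_x ≡ α̂`. -/
noncomputable def hpGen (n : ℕ) (αh : ℝ) (f : (Fin n → ℝ) → ℝ) (η : Fin n → ℝ) : ℝ :=
  ∑ x, ∑ y ∈ Finset.univ.erase x,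
    (1 / (n : ℝ)) * ∫ u in Set.Ioo (0:ℝ) 1,
      u ^ (αh - 1) * (1 - u)⁻¹ * (f (hpUpdate η x y u) - f η)

lemma base_int (r : ℝ) (hr : -1 < r) :
    ∫ u in Set.Ioo (0:ℝ) 1, u ^ r = 1 / (r + 1) := by
  rw [← integral_Ioc_eq_integral_Ioo, ← intervalIntegral.integral_of_le zero_le_one,
    integral_rpow (Or.inl hr), Real.one_rpow, Real.zero_rpow (by linarith)]
  ring

lemma base_intgl (r : ℝ) (hr : -1 < r) :
    IntegrableOn (fun u : ℝ => u ^ r) (Set.Ioo 0 1) := by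
  exact ((intervalIntegral.intervalIntegrable_rpow' hr (a := 0) (b := 1)).1).mono_set
    Set.Ioo_subset_Ioc_self

lemma sq_diff {n : ℕ} (η : Fin n → ℝ) (x y : Fin n) (hxy : x ≠ y) (u : ℝ) :
    (∑ z, (hpUpdate η x y u z)^2) - ∑ z, (η z)^2
      = (u * η x)^2 + ((1 - u) * η x + η y)^2 - (η x)^2 - (η y)^2 := by
  rw [← Finset.sum_sub_distrib]
  have hsub : ∑ z, ((hpUpdate η x y u z)^2 - (η z)^2)
      = ∑ z ∈ ({x, y} : Finset (Fin n)), ((hpUpdate η x y u z)^2 - (η z)^2) := by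
    refine (Finset.sum_subset (Finset.subset_univ _) ?_).symm
    intro z _ hz
    simp only [Finset.mem_insert, Finset.mem_singleton, not_or] at hz
    have : hpUpdate η x y u z = η z := by
      unfold hpUpdate
      rw [Function.update_of_ne hz.2, Function.update_of_ne hz.1]
    rw [this]; ring
  have hx : hpUpdate η x y u x = u * η x := by
    unfold hpUpdate
    rw [Function.update_of_ne hxy, Function.update_self]
  have hy : hpUpdate η x y u y = (1 - u) * η x + η y := by
    unfold hpUpdate; rw [Function.update_self]
  rw [hsub, Finset.sum_pair hxy, hx, hy]; ring

lemma pair_int {n : ℕ} (αh : ℝ) (hαh : 0 < αh) (a : ℝ) (η : Fin n → ℝ) (x y : Fin n)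
    (hxy : x ≠ y) :
    (∫ u in Set.Ioo (0:ℝ) 1, u ^ (αh - 1) * (1 - u)⁻¹ *
      (((∑ z, (hpUpdate η x y u z)^2) - a) - ((∑ z, (η z)^2) - a)))
    = -2 * (η x)^2 / (αh + 1) + 2 * (η x) * (η y) / αh := by
  have hcong : ∀ u ∈ Set.Ioo (0:ℝ) 1,
      u ^ (αh - 1) * (1 - u)⁻¹ *
        (((∑ z, (hpUpdate η x y u z)^2) - a) - ((∑ z, (η z)^2) - a))
      = (-2 * (η x)^2) * u ^ αh + (2 * (η x) * (η y)) * u ^ (αh - 1) := by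
    intro u hu
    obtain ⟨hu0, hu1⟩ := hu
    have hdiff : ((∑ z, (hpUpdate η x y u z)^2) - a) - ((∑ z, (η z)^2) - a)
        = (u * η x)^2 + ((1 - u) * η x + η y)^2 - (η x)^2 - (η y)^2 := by
      rw [sub_sub_sub_cancel_right, sq_diff η x y hxy u]
    rw [hdiff]
    have e1 : u ^ αh = u ^ (αh - 1) * u := by
      rw [← Real.rpow_add_one (ne_of_gt hu0)]; ring_nf
    have h1u : (1 : ℝ) - u ≠ 0 := by linarith
    rw [e1]
    field_simp
    ring
  rw [setIntegral_congr_fun measurableSet_Ioo hcong]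
  rw [integral_add (((base_intgl αh (by linarith)).const_mul _))
      (((base_intgl (αh - 1) (by linarith)).const_mul _)),
    MeasureTheory.integral_const_mul, MeasureTheory.integral_const_mul, base_int αh (by linarith),
    base_int (αh - 1) (by linarith)]
  have : αh - 1 + 1 = αh := by ring
  rw [this]
  field_simp

theorem stmt_12 (n : ℕ) (hn : 2 ≤ n) (αh : ℝ) (hαh : 0 < αh)
    (a lam2 : ℝ)
    (ha : a = (1 / (n : ℝ)) * ((αh + 1) / (αh + 1 / n)))
    (hlam : lam2 = (2 / αh) * ((αh + 1 / n) / (αh + 1))) :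
    (∀ η : Fin n → ℝ, (∀ x, 0 ≤ η x) → (∑ x, η x) = 1 →
      hpGen n αh (fun η' => (∑ x, (η' x)^2) - a) η
        = -lam2 * ((∑ x, (η x)^2) - a)) ∧
    (lam2 < 1 / αh ↔ αh < 1 - 2 / n) := by
  have hn0 : (0:ℝ) < (n:ℝ) := by
    have : (0:ℕ) < n := by omega
    exact_mod_cast this
  have hne : (n:ℝ) ≠ 0 := ne_of_gt hn0
  have hα1 : (0:ℝ) < αh + 1 := by linarith
  have hαn : (0:ℝ) < αh + 1 / n := by positivity
  constructor
  · intro η _ hsum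
    unfold hpGen
    simp only []
    have hrw : ∀ x : Fin n, ∀ y ∈ Finset.univ.erase x,
        (1 / (n : ℝ)) * ∫ u in Set.Ioo (0:ℝ) 1,
          u ^ (αh - 1) * (1 - u)⁻¹ *
            (((∑ z, (hpUpdate η x y u z)^2) - a) - ((∑ z, (η z)^2) - a))
        = (1 / (n:ℝ)) * (-2 * (η x)^2 / (αh + 1) + 2 * (η x) * (η y) / αh) := by
      intro x y hy
      have hxy : x ≠ y := (Finset.ne_of_mem_erase hy).symm
      rw [pair_int αh hαh a η x y hxy]
    calc ∑ x, ∑ y ∈ Finset.univ.erase x,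
          (1 / (n : ℝ)) * ∫ u in Set.Ioo (0:ℝ) 1,
            u ^ (αh - 1) * (1 - u)⁻¹ *
              (((∑ z, (hpUpdate η x y u z)^2) - a) - ((∑ z, (η z)^2) - a))
        = ∑ x, ∑ y ∈ Finset.univ.erase x,
            (1 / (n:ℝ)) * (-2 * (η x)^2 / (αh + 1) + 2 * (η x) * (η y) / αh) := by
          exact Finset.sum_congr rfl fun x _ => Finset.sum_congr rfl (hrw x)
      _ = ∑ x, (1 / (n:ℝ)) * (((n:ℝ) - 1) * (-2 * (η x)^2 / (αh + 1))
            + (2 * η x / αh) * (1 - η x)) := by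
          refine Finset.sum_congr rfl fun x _ => ?_
          rw [← Finset.mul_sum]
          congr 1
          have hcard : ((Finset.univ.erase x).card : ℝ) = (n:ℝ) - 1 := by
            rw [Finset.card_erase_of_mem (Finset.mem_univ x), Finset.card_univ,
              Fintype.card_fin]
            have : (1:ℕ) ≤ n := by omega
            push_cast [Nat.cast_sub this]
            ring
          have hsume : ∑ y ∈ Finset.univ.erase x, η y = 1 - η x := by
            rw [Finset.sum_erase_eq_sub (Finset.mem_univ x), hsum]
          calc ∑ y ∈ Finset.univ.erase x,
                (-2 * (η x)^2 / (αh + 1) + 2 * (η x) * (η y) / αh)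
              = ∑ y ∈ Finset.univ.erase x, (-2 * (η x)^2 / (αh + 1))
                + ∑ y ∈ Finset.univ.erase x, (2 * η x / αh) * η y := by
                rw [← Finset.sum_add_distrib]
                exact Finset.sum_congr rfl fun y _ => by ring
            _ = ((Finset.univ.erase x).card : ℝ) * (-2 * (η x)^2 / (αh + 1))
                + (2 * η x / αh) * ∑ y ∈ Finset.univ.erase x, η y := by
                rw [Finset.sum_const, nsmul_eq_mul, ← Finset.mul_sum]
            _ = ((n:ℝ) - 1) * (-2 * (η x)^2 / (αh + 1)) + (2 * η x / αh) * (1 - η x) := by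
                rw [hcard, hsume]
      _ = ((1 / (n:ℝ)) * (((n:ℝ) - 1) * (-2 / (αh + 1)) - 2 / αh)) * (∑ x, (η x)^2)
            + ((1 / (n:ℝ)) * (2 / αh)) * (∑ x, η x) := by
          rw [Finset.mul_sum, Finset.mul_sum, ← Finset.sum_add_distrib]
          exact Finset.sum_congr rfl fun x _ => by ring
      _ = -lam2 * ((∑ x, (η x)^2) - a) := by
          rw [hsum, ha, hlam]
          field_simp
          ring
  · rw [hlam]
    have hl : (2 / αh) * ((αh + 1 / n) / (αh + 1))
        = (2 * (αh + 1 / n)) / (αh * (αh + 1)) := by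
      field_simp
    rw [hl, show (1:ℝ) / αh = (αh + 1) / (αh * (αh + 1)) by field_simp,
      div_lt_div_iff_of_pos_right (by positivity)]
    have e : (2:ℝ) / n = 2 * (1 / n) := by ring
    constructor <;> intro h <;> linarith
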